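/- arXiv:1903.11715 — 6 statements merged into one kernel-verified Lean document; each statement's English description precedes it below -/
import Mathlib

section
/- For every natural number t ≥ 1, the map ξ_t(x) = (1 - (-1)^⌊tx⌋)/2 + (-1)^⌊tx⌋ · {tx} (where {·} is the fractional part) commutes with the tent map f(x) = 1 - |1-2x| on [0,1]. -/
open Real Set

/-- The tent map `f(x) = 1 - |1 - 2x|`. -/
noncomputable def tent (x : ℝ) : ℝ := 1 - |1 - 2 * x|

/-- The map `ξ_t(x) = (1 - (-1)^⌊tx⌋)/2 + (-1)^⌊tx⌋ · {tx}`. -/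
noncomputable def xi (t : ℕ) (x : ℝ) : ℝ :=
  (1 - (-1 : ℝ) ^ ⌊(t : ℝ) * x⌋) / 2
    + (-1 : ℝ) ^ ⌊(t : ℝ) * x⌋ * ((t : ℝ) * x - ⌊(t : ℝ) * x⌋)

lemma xi_mem (t : ℕ) (x : ℝ) : xi t x ∈ Set.Icc (0 : ℝ) 1 := by
  have h1 : (0:ℝ) ≤ (t : ℝ) * x - ⌊(t : ℝ) * x⌋ := by
    have := Int.floor_le ((t : ℝ) * x); linarith
  have h2 : (t : ℝ) * x - ⌊(t : ℝ) * x⌋ < 1 := by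
    have := Int.lt_floor_add_one ((t : ℝ) * x); linarith
  unfold xi
  rcases Int.even_or_odd ⌊(t : ℝ) * x⌋ with h | h
  · rw [h.neg_one_zpow]; constructor <;> [linarith; linarith]
  · rw [h.neg_one_zpow]; constructor <;> [linarith; linarith]

lemma tent_mem {x : ℝ} (hx : x ∈ Set.Icc (0:ℝ) 1) : tent x ∈ Set.Icc (0:ℝ) 1 := by
  obtain ⟨h0, h1⟩ := hx
  have habs : |1 - 2 * x| ≤ 1 := abs_le.2 ⟨by linarith, by linarith⟩
  have := abs_nonneg (1 - 2 * x)
  exact ⟨by unfold tent; linarith, by unfold tent; linarith⟩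

lemma cos_xi (t : ℕ) (x : ℝ) :
    Real.cos (π * xi t x) = Real.cos (π * ((t : ℝ) * x)) := by
  set n := ⌊(t : ℝ) * x⌋ with hn
  rcases Int.even_or_odd n with ⟨k, hk⟩ | ⟨k, hk⟩
  · have he : Even n := ⟨k, hk⟩
    unfold xi
    rw [← hn, he.neg_one_zpow]
    have : π * ((1 - 1) / 2 + 1 * ((t : ℝ) * x - n))
        = π * ((t : ℝ) * x) + ((-k : ℤ) : ℝ) * (2 * π) := by
      rw [hk]; push_cast; ring
    rw [this, Real.cos_add_int_mul_two_pi]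
  · have ho : Odd n := ⟨k, hk⟩
    unfold xi
    rw [← hn, ho.neg_one_zpow]
    have : π * ((1 - -1) / 2 + -1 * ((t : ℝ) * x - n))
        = -(π * ((t : ℝ) * x)) + ((k + 1 : ℤ) : ℝ) * (2 * π) := by
      rw [hk]; push_cast; ring
    rw [this, Real.cos_add_int_mul_two_pi, Real.cos_neg]

lemma cos_tent (x : ℝ) : Real.cos (π * tent x) = Real.cos (2 * (π * x)) := by
  unfold tent
  rcases abs_cases (1 - 2 * x) with ⟨h, _⟩ | ⟨h, _⟩
  · rw [h]; ring_nf
  · rw [h]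
    have : π * (1 - -(1 - 2 * x)) = -(2 * (π * x)) + ((1 : ℤ) : ℝ) * (2 * π) := by
      push_cast; ring
    rw [this, Real.cos_add_int_mul_two_pi, Real.cos_neg]

lemma cos_t_tent (t : ℕ) (x : ℝ) :
    Real.cos (π * ((t : ℝ) * tent x)) = Real.cos (2 * (π * ((t : ℝ) * x))) := by
  unfold tent
  rcases abs_cases (1 - 2 * x) with ⟨h, _⟩ | ⟨h, _⟩
  · rw [h]; ring_nf
  · rw [h]
    have : π * ((t : ℝ) * (1 - -(1 - 2 * x)))
        = -(2 * (π * ((t : ℝ) * x))) + ((t : ℤ) : ℝ) * (2 * π) := by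
      push_cast; ring
    rw [this, Real.cos_add_int_mul_two_pi, Real.cos_neg]

/-- For every `t ≥ 1`, the map `ξ_t` commutes with the tent map on `[0,1]`. -/
theorem tent_comm_xi (t : ℕ) (ht : 1 ≤ t) :
    ∀ x ∈ Set.Icc (0 : ℝ) 1, tent (xi t x) = xi t (tent x) := by
  intro x hx
  have ha := tent_mem (xi_mem t x)
  have hb := xi_mem t (tent x)
  have hπ := Real.pi_pos
  have hmem : ∀ {y : ℝ}, y ∈ Set.Icc (0:ℝ) 1 → π * y ∈ Set.Icc 0 π := by
    intro y ⟨h0, h1⟩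
    exact ⟨by positivity, by nlinarith⟩
  have hcos : Real.cos (π * tent (xi t x)) = Real.cos (π * xi t (tent x)) := by
    rw [cos_tent, cos_xi, cos_t_tent]
    rw [Real.cos_two_mul, Real.cos_two_mul, cos_xi]
  have := Real.injOn_cos (hmem ha) (hmem hb) hcos
  exact mul_left_cancel₀ (ne_of_gt hπ) this
end

section
/- Let γ₁, γ₂, γ₃, γ₄ be the slopes of a piecewise linear unimodal map and s₁,…,s₆ nonzero reals satisfying the relations s₁γ₂ = γ₁s₂, s₂γ₃ = γ₁s₃, s₂γ₄ = γ₂s₄, s₃γ₄ = γ₂s₅, s₃γ₃ = γ₂s₆, s₄γ₂ = γ₃s₆, s₄γ₁ = γ₃s₅, s₅γ₁ = γ₃s₄, s₅γ₂ = γ₄s₃, s₆γ₃ = γ₄s₂, s₆γ₄ = γ₄s₁. Then γ₃ = -γ₁ and γ₄ = -γ₁²/γ₂. -/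
/-!
Each relation `sᵢ γ = γ' sⱼ` says that one slope ratio carries `sᵢ` to `sⱼ`; following a closed
cycle of relations back to the starting `sᵢ ≠ 0` forces the product of the ratios to be `1`.
The two-cycle `s₄ → s₅ → s₄` gives `γ₁² = γ₃²`, hence `γ₃ = -γ₁` by the signs, and the
three-cycle `s₂ → s₃ → s₆ → s₂` gives `γ₃³ = γ₁ γ₂ γ₄`, which then reads `γ₂ γ₄ = -γ₁²`.
-/

section Cycles

variable {R : Type*} [CommRing R] [NoZeroDivisors R] {a b c x p q r : R}

theorem sq_eq_mul_of_two_cycle (ha : a ≠ 0) (hab : a * x = p * b) (hba : b * x = q * a) :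
    x ^ 2 = p * q :=
  mul_left_cancel₀ ha <| by linear_combination x * hab + p * hba

theorem pow_three_eq_mul_of_three_cycle (ha : a ≠ 0) (hab : a * x = p * b)
    (hbc : b * x = q * c) (hca : c * x = r * a) : x ^ 3 = p * q * r :=
  mul_left_cancel₀ ha <| by linear_combination x ^ 2 * hab + p * x * hbc + p * q * hca

end Cycles

theorem slope_relations_example2_general (γ₁ γ₂ γ₃ γ₄ s₂ s₃ s₄ s₅ s₆ : ℝ)
    (hγ₁ : 0 < γ₁) (hγ₂ : 0 < γ₂) (hγ₃ : γ₃ < 0)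
    (hs₂ : s₂ ≠ 0)
    (hs₄ : s₄ ≠ 0)
    (h2 : s₂ * γ₃ = γ₁ * s₃)
    (h5 : s₃ * γ₃ = γ₂ * s₆)
    (h7 : s₄ * γ₁ = γ₃ * s₅)
    (h8 : s₅ * γ₁ = γ₃ * s₄)
    (h10 : s₆ * γ₃ = γ₄ * s₂) :
    γ₃ = -γ₁ ∧ γ₄ = -γ₁ ^ 2 / γ₂ := by
  have hsq : γ₁ ^ 2 = γ₃ ^ 2 := (sq_eq_mul_of_two_cycle hs₄ h7 h8).trans (sq γ₃).symm
  have hγ₃₁ : γ₃ = -γ₁ :=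
    (sq_eq_sq_iff_eq_or_eq_neg.1 hsq.symm).resolve_left fun h => by linarith
  refine ⟨hγ₃₁, eq_div_of_mul_eq hγ₂.ne' (mul_left_cancel₀ hγ₁.ne' ?_)⟩
  have hcube : γ₃ ^ 3 = γ₁ * γ₂ * γ₄ := pow_three_eq_mul_of_three_cycle hs₂ h2 h5 h10
  rw [hγ₃₁] at hcube
  linear_combination -hcube

/-- From the eleven slope relations of the lattice of Figure 9 one deduces
`γ₃ = -γ₁` and `γ₄ = -γ₁²/γ₂`. -/
theorem slope_relations_example2 (γ₁ γ₂ γ₃ γ₄ s₁ s₂ s₃ s₄ s₅ s₆ : ℝ)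
    (hγ₁ : 0 < γ₁) (hγ₂ : 0 < γ₂) (hγ₃ : γ₃ < 0) (hγ₄ : γ₄ < 0)
    (hs₁ : s₁ ≠ 0) (hs₂ : s₂ ≠ 0) (hs₃ : s₃ ≠ 0)
    (hs₄ : s₄ ≠ 0) (hs₅ : s₅ ≠ 0) (hs₆ : s₆ ≠ 0)
    (h1 : s₁ * γ₂ = γ₁ * s₂)
    (h2 : s₂ * γ₃ = γ₁ * s₃)
    (h3 : s₂ * γ₄ = γ₂ * s₄)
    (h4 : s₃ * γ₄ = γ₂ * s₅)
    (h5 : s₃ * γ₃ = γ₂ * s₆)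
    (h6 : s₄ * γ₂ = γ₃ * s₆)
    (h7 : s₄ * γ₁ = γ₃ * s₅)
    (h8 : s₅ * γ₁ = γ₃ * s₄)
    (h9 : s₅ * γ₂ = γ₄ * s₃)
    (h10 : s₆ * γ₃ = γ₄ * s₂)
    (h11 : s₆ * γ₄ = γ₄ * s₁) :
    γ₃ = -γ₁ ∧ γ₄ = -γ₁ ^ 2 / γ₂ :=
  slope_relations_example2_general γ₁ γ₂ γ₃ γ₄ s₂ s₃ s₄ s₅ s₆ hγ₁ hγ₂ hγ₃ hs₂ hs₄ h2 h5 h7 h8 h10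
end

section
/- Let 0 < a < b < 1 with 4a + b < 4, and let g be the piecewise linear map through the points (0,0), (a/2, a), (a, a+b), ((4a+b)/4, 1), ((2a+b)/2, a+b), (a+b, a), (1, 0). Let h be the piecewise linear increasing map through (0,0), (a, 2/5), (a+b, 4/5), (1,1). Then h is a homeomorphism of [0,1] and h ∘ g = f ∘ h, where f is the tent map; i.e. g is topologically conjugate to the tent map. -/
/-- `F` is affine (linear) on the set `s`. -/
def AffOn (F : ℝ → ℝ) (s : Set ℝ) : Prop :=
  ∃ m c : ℝ, ∀ x ∈ s, F x = m * x + c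

/-!
Both sides of `h ∘ g = tent ∘ h` are affine on each of the six pieces of `g`: the piece is
mapped by `g` into a piece of `h`, it lies inside a piece of `h`, and `h` maps it into
`[0, 1/2]` or `[1/2, 1]`, where the tent map is affine. Two affine maps agreeing at the two
endpoints of an interval agree on it, so it suffices to check the identity at the seven nodes.
-/

open Set

namespace AffOn

variable {F G : ℝ → ℝ} {s t : Set ℝ} {p q x : ℝ}

lemma mono (hF : AffOn F s) (hts : t ⊆ s) : AffOn F t :=
  let ⟨m, c, H⟩ := hF
  ⟨m, c, fun x hx => H x (hts hx)⟩

lemma comp (hG : AffOn G t) (hF : AffOn F s) (hst : MapsTo F s t) : AffOn (G ∘ F) s := by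
  obtain ⟨m, c, H⟩ := hF
  obtain ⟨m', c', H'⟩ := hG
  exact ⟨m' * m, m' * c + c', fun x hx => by
    rw [Function.comp_apply, H' _ (hst hx), H x hx]; ring⟩

lemma continuousOn (hF : AffOn F s) : ContinuousOn F s := by
  obtain ⟨m, c, H⟩ := hF
  exact (continuousOn_const.mul continuousOn_id |>.add continuousOn_const).congr H

lemma apply_eq_add_mul (hF : AffOn F (Icc p q)) (hx : x ∈ Icc p q) (t : ℝ)
    (hxt : x = p + t * (q - p)) : F x = F p + t * (F q - F p) := by
  obtain ⟨m, c, H⟩ := hF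
  have hpq : p ≤ q := hx.1.trans hx.2
  rw [H x hx, H p ⟨le_rfl, hpq⟩, H q ⟨hpq, le_rfl⟩, hxt]
  ring

lemma eqOn (hF : AffOn F s) (hG : AffOn G s) (hp : p ∈ s) (hq : q ∈ s) (hpq : p ≠ q)
    (hFGp : F p = G p) (hFGq : F q = G q) : EqOn F G s := by
  obtain ⟨m, c, H⟩ := hF
  obtain ⟨m', c', H'⟩ := hG
  rw [H p hp, H' p hp] at hFGp
  rw [H q hq, H' q hq] at hFGq
  obtain rfl : m = m' := mul_right_cancel₀ (sub_ne_zero.2 hpq) (by linarith)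
  intro x hx
  rw [H x hx, H' x hx]
  linarith

lemma mapsTo_uIcc (hF : AffOn F (Icc p q)) : MapsTo F (Icc p q) (uIcc (F p) (F q)) := by
  obtain ⟨m, c, H⟩ := hF
  intro x hx
  have hpq : p ≤ q := hx.1.trans hx.2
  rw [mem_uIcc, H x hx, H p ⟨le_rfl, hpq⟩, H q ⟨hpq, le_rfl⟩]
  rcases le_total 0 m with hm | hm
  · left
    constructor <;> nlinarith [hx.1, hx.2]
  · right
    constructor <;> nlinarith [hx.1, hx.2]

lemma strictMonoOn_and_image_Icc (hF : AffOn F (Icc p q)) (hpq : p ≤ q) (hFpq : F p < F q) :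
    StrictMonoOn F (Icc p q) ∧ F '' Icc p q = Icc (F p) (F q) := by
  refine ⟨?_, (image_subset_iff.2 (uIcc_of_le hFpq.le ▸ hF.mapsTo_uIcc)).antisymm
    (intermediate_value_Icc hpq hF.continuousOn)⟩
  obtain ⟨m, c, H⟩ := hF
  intro x hx y hy hxy
  rw [H p ⟨le_rfl, hpq⟩, H q ⟨hpq, le_rfl⟩] at hFpq
  have hm : 0 < m := by nlinarith
  rw [H x hx, H y hy]
  nlinarith

end AffOn

lemma affOn_tent_Iic : AffOn tent (Iic (1 / 2)) :=
  ⟨2, 0, fun x hx => by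
    rw [tent, abs_of_nonneg (by linarith [mem_Iic.1 hx])]; ring⟩

lemma affOn_tent_Ici : AffOn tent (Ici (1 / 2)) :=
  ⟨-2, 2, fun x hx => by
    rw [tent, abs_of_nonpos (by linarith [mem_Ici.1 hx])]; ring⟩

lemma strictMonoOn_and_image_Icc_union_Icc {F : ℝ → ℝ} {p q r : ℝ}
    (hpq : p ≤ q) (hqr : q ≤ r)
    (h₁ : StrictMonoOn F (Icc p q) ∧ F '' Icc p q = Icc (F p) (F q))
    (h₂ : StrictMonoOn F (Icc q r) ∧ F '' Icc q r = Icc (F q) (F r)) :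
    StrictMonoOn F (Icc p r) ∧ F '' Icc p r = Icc (F p) (F r) := by
  rw [← Icc_union_Icc_eq_Icc hpq hqr, image_union, h₁.2, h₂.2, Icc_union_Icc_eq_Icc
    (h₁.1.monotoneOn (left_mem_Icc.2 hpq) (right_mem_Icc.2 hpq) hpq)
    (h₂.1.monotoneOn (left_mem_Icc.2 hqr) (right_mem_Icc.2 hqr) hqr)]
  exact ⟨h₁.1.union h₂.1 (isGreatest_Icc hpq) (isLeast_Icc hqr), rfl⟩

lemma Set.EqOn.Icc_union_Icc {F G : ℝ → ℝ} {p q r : ℝ} (h₁ : EqOn F G (Icc p q))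
    (h₂ : EqOn F G (Icc q r)) (hpq : p ≤ q) (hqr : q ≤ r) : EqOn F G (Icc p r) :=
  Icc_union_Icc_eq_Icc hpq hqr ▸ h₁.union h₂

lemma eqOn_comp_of_affOn {g h T : ℝ → ℝ} {p q r s : ℝ} {L : Set ℝ} [L.OrdConnected]
    (hpq : p < q) (hg : AffOn g (Icc p q)) (hh : AffOn h (Icc r s)) (hh' : AffOn h (Icc p q))
    (hT : AffOn T L) (hgp : g p ∈ Icc r s) (hgq : g q ∈ Icc r s) (hhp : h p ∈ L)
    (hhq : h q ∈ L) (hp : h (g p) = T (h p)) (hq : h (g q) = T (h q)) :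
    EqOn (h ∘ g) (T ∘ h) (Icc p q) :=
  (hh.comp hg fun _ hx => uIcc_subset_Icc hgp hgq (hg.mapsTo_uIcc hx)).eqOn
    (hT.comp hh' fun _ hx => OrdConnected.uIcc_subset ‹_› hhp hhq (hh'.mapsTo_uIcc hx))
    (left_mem_Icc.2 hpq.le) (right_mem_Icc.2 hpq.le) hpq.ne hp hq

lemma comp_eqOn_tent_comp {a b : ℝ} {g h : ℝ → ℝ}
    (ha : 0 < a) (hb : 0 < b) (hab : a + b < 1)
    (hg0 : g 0 = 0) (hg1 : g (a / 2) = a) (hg2 : g a = a + b)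
    (hg3 : g ((4 * a + b) / 4) = 1) (hg4 : g ((2 * a + b) / 2) = a + b)
    (hg5 : g (a + b) = a) (hg6 : g 1 = 0)
    (hgA1 : AffOn g (Icc 0 (a / 2))) (hgA2 : AffOn g (Icc (a / 2) a))
    (hgA3 : AffOn g (Icc a ((4 * a + b) / 4)))
    (hgA4 : AffOn g (Icc ((4 * a + b) / 4) ((2 * a + b) / 2)))
    (hgA5 : AffOn g (Icc ((2 * a + b) / 2) (a + b))) (hgA6 : AffOn g (Icc (a + b) 1))
    (hh0 : h 0 = 0) (hh1 : h (a / 2) = 1 / 5) (hh2 : h a = 2 / 5)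
    (hh3 : h ((4 * a + b) / 4) = 1 / 2) (hh4 : h ((2 * a + b) / 2) = 3 / 5)
    (hh5 : h (a + b) = 4 / 5) (hh6 : h 1 = 1)
    (hhA1 : AffOn h (Icc 0 a)) (hhA2 : AffOn h (Icc a (a + b))) (hhA3 : AffOn h (Icc (a + b) 1)) :
    EqOn (h ∘ g) (tent ∘ h) (Icc 0 1) := by
  have e1 := eqOn_comp_of_affOn (by linarith) hgA1 hhA1
    (hhA1.mono (Icc_subset_Icc_right (by linarith))) affOn_tent_Iic ?_ ?_ ?_ ?_ ?_ ?_
  have e2 := eqOn_comp_of_affOn (by linarith) hgA2 hhA2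
    (hhA1.mono (Icc_subset_Icc_left (by linarith))) affOn_tent_Iic ?_ ?_ ?_ ?_ ?_ ?_
  have e3 := eqOn_comp_of_affOn (by linarith) hgA3 hhA3
    (hhA2.mono (Icc_subset_Icc_right (by linarith))) affOn_tent_Iic ?_ ?_ ?_ ?_ ?_ ?_
  have e4 := eqOn_comp_of_affOn (by linarith) hgA4 hhA3
    (hhA2.mono (Icc_subset_Icc (by linarith) (by linarith))) affOn_tent_Ici ?_ ?_ ?_ ?_ ?_ ?_
  have e5 := eqOn_comp_of_affOn (by linarith) hgA5 hhA2
    (hhA2.mono (Icc_subset_Icc_left (by linarith))) affOn_tent_Ici ?_ ?_ ?_ ?_ ?_ ?_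
  have e6 := eqOn_comp_of_affOn (by linarith) hgA6 hhA1 hhA3 affOn_tent_Ici ?_ ?_ ?_ ?_ ?_ ?_
  · refine ((((e1.Icc_union_Icc e2 ?_ ?_).Icc_union_Icc e3 ?_ ?_).Icc_union_Icc e4 ?_ ?_)
      |>.Icc_union_Icc e5 ?_ ?_).Icc_union_Icc e6 ?_ ?_ <;> linarith
  -- what remains are the side conditions of the six pieces, all checked at the nodes
  all_goals
    simp only [mem_Icc, mem_Iic, mem_Ici, hg0, hg1, hg2, hg3, hg4, hg5, hg6, hh0, hh1, hh2, hh3,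
      hh4, hh5, hh6]
    norm_num [tent]
  all_goals linarith

theorem conj_example2_general (a b : ℝ) (ha : 0 < a) (hab : a < b) (hb : b < 1)
    (g h : ℝ → ℝ)
    (hg0 : g 0 = 0) (hg1 : g (a / 2) = a) (hg2 : g a = a + b)
    (hg3 : g ((4 * a + b) / 4) = 1) (hg4 : g ((2 * a + b) / 2) = a + b)
    (hg5 : g (a + b) = a) (hg6 : g 1 = 0)
    (hgA1 : AffOn g (Set.Icc 0 (a / 2)))
    (hgA2 : AffOn g (Set.Icc (a / 2) a))
    (hgA3 : AffOn g (Set.Icc a ((4 * a + b) / 4)))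
    (hgA4 : AffOn g (Set.Icc ((4 * a + b) / 4) ((2 * a + b) / 2)))
    (hgA5 : AffOn g (Set.Icc ((2 * a + b) / 2) (a + b)))
    (hgA6 : AffOn g (Set.Icc (a + b) 1))
    (hh0 : h 0 = 0) (hh1 : h a = 2 / 5) (hh2 : h (a + b) = 4 / 5) (hh3 : h 1 = 1)
    (hhA1 : AffOn h (Set.Icc 0 a))
    (hhA2 : AffOn h (Set.Icc a (a + b)))
    (hhA3 : AffOn h (Set.Icc (a + b) 1)) :
    StrictMonoOn h (Set.Icc (0 : ℝ) 1) ∧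
    h '' Set.Icc (0 : ℝ) 1 = Set.Icc (0 : ℝ) 1 ∧
    ∀ x ∈ Set.Icc (0 : ℝ) 1, h (g x) = tent (h x) := by
  have hb0 : 0 < b := ha.trans hab
  have hab1 : a + b < 1 := by
    by_contra! h1
    have := hhA2.mapsTo_uIcc ⟨(hab.trans hb).le, h1⟩
    rw [hh1, hh2, hh3, uIcc_of_le (by norm_num)] at this
    norm_num at this
  have hh_half : h (a / 2) = 1 / 5 := by
    rw [hhA1.apply_eq_add_mul ⟨by linarith, by linarith⟩ (1 / 2) (by ring), hh0, hh1]
    norm_num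
  have hh_quarter : h ((4 * a + b) / 4) = 1 / 2 := by
    rw [hhA2.apply_eq_add_mul ⟨by linarith, by linarith⟩ (1 / 4) (by ring), hh1, hh2]
    norm_num
  have hh_mid : h ((2 * a + b) / 2) = 3 / 5 := by
    rw [hhA2.apply_eq_add_mul ⟨by linarith, by linarith⟩ (1 / 2) (by ring), hh1, hh2]
    norm_num
  have hhom := strictMonoOn_and_image_Icc_union_Icc (by linarith) hab1.le
    (strictMonoOn_and_image_Icc_union_Icc ha.le (by linarith)
      (hhA1.strictMonoOn_and_image_Icc ha.le (by rw [hh0, hh1]; norm_num))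
      (hhA2.strictMonoOn_and_image_Icc (by linarith) (by rw [hh1, hh2]; norm_num)))
    (hhA3.strictMonoOn_and_image_Icc hab1.le (by rw [hh2, hh3]; norm_num))
  rw [hh0, hh3] at hhom
  exact ⟨hhom.1, hhom.2, comp_eqOn_tent_comp ha hb0 hab1 hg0 hg1 hg2 hg3 hg4 hg5 hg6
    hgA1 hgA2 hgA3 hgA4 hgA5 hgA6 hh0 hh_half hh1 hh_quarter hh_mid hh2 hh3 hhA1 hhA2 hhA3⟩

/-- For `0 < a < b < 1` with `4a + b < 4`, the piecewise linear map `g` through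
`(0,0)`, `(a/2, a)`, `(a, a+b)`, `((4a+b)/4, 1)`, `((2a+b)/2, a+b)`, `(a+b, a)`, `(1,0)`
is conjugate to the tent map via the piecewise linear increasing map `h` through
`(0,0)`, `(a, 2/5)`, `(a+b, 4/5)`, `(1,1)`, which is a homeomorphism of `[0,1]`. -/
theorem conj_example2 (a b : ℝ) (ha : 0 < a) (hab : a < b) (hb : b < 1)
    (hlt : 4 * a + b < 4) (g h : ℝ → ℝ)
    (hg0 : g 0 = 0) (hg1 : g (a / 2) = a) (hg2 : g a = a + b)
    (hg3 : g ((4 * a + b) / 4) = 1) (hg4 : g ((2 * a + b) / 2) = a + b)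
    (hg5 : g (a + b) = a) (hg6 : g 1 = 0)
    (hgA1 : AffOn g (Set.Icc 0 (a / 2)))
    (hgA2 : AffOn g (Set.Icc (a / 2) a))
    (hgA3 : AffOn g (Set.Icc a ((4 * a + b) / 4)))
    (hgA4 : AffOn g (Set.Icc ((4 * a + b) / 4) ((2 * a + b) / 2)))
    (hgA5 : AffOn g (Set.Icc ((2 * a + b) / 2) (a + b)))
    (hgA6 : AffOn g (Set.Icc (a + b) 1))
    (hh0 : h 0 = 0) (hh1 : h a = 2 / 5) (hh2 : h (a + b) = 4 / 5) (hh3 : h 1 = 1)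
    (hhA1 : AffOn h (Set.Icc 0 a))
    (hhA2 : AffOn h (Set.Icc a (a + b)))
    (hhA3 : AffOn h (Set.Icc (a + b) 1)) :
    StrictMonoOn h (Set.Icc (0 : ℝ) 1) ∧
    h '' Set.Icc (0 : ℝ) 1 = Set.Icc (0 : ℝ) 1 ∧
    ∀ x ∈ Set.Icc (0 : ℝ) 1, h (g x) = tent (h x) :=
  conj_example2_general a b ha hab hb g h hg0 hg1 hg2 hg3 hg4 hg5 hg6 hgA1 hgA2 hgA3 hgA4 hgA5 hgA6
    hh0 hh1 hh2 hh3 hhA1 hhA2 hhA3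
end

section
/- If a piecewise linear map g : [0,1] → [0,1] with g(0)=0 is topologically conjugate to the tent map via a piecewise linear increasing homeomorphism h (h ∘ f = g ∘ h), then the right derivative of g at 0 equals 2. -/
/-- `F` is piecewise linear on `[0,1]`: there is a finite partition
`0 = t 0 < t 1 < ⋯ < t n = 1` such that `F` is affine on each part. -/
def PiecewiseLinear (F : ℝ → ℝ) : Prop :=
  ∃ (n : ℕ) (t : ℕ → ℝ), 1 ≤ n ∧ t 0 = 0 ∧ t n = 1 ∧
    (∀ i < n, t i < t (i + 1)) ∧ ∀ i < n, AffOn F (Set.Icc (t i) (t (i + 1)))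

/-- If a piecewise linear map `g` of `[0,1]` with `g 0 = 0` is conjugate to the tent map
via a piecewise linear increasing homeomorphism `h`, then the right derivative of `g`
at `0` equals `2`. -/
theorem deriv_at_zero_eq_two (g h : ℝ → ℝ)
    (hgPL : PiecewiseLinear g) (hhPL : PiecewiseLinear h)
    (hg0 : g 0 = 0)
    (hmono : StrictMonoOn h (Set.Icc 0 1))
    (hh0 : h 0 = 0) (hh1 : h 1 = 1)
    (hconj : ∀ x ∈ Set.Icc (0 : ℝ) 1, h (tent x) = g (h x)) :
    HasDerivWithinAt g 2 (Set.Ici 0) 0 := by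
  obtain ⟨n, t, hn, ht0, ht1, htlt, htaff⟩ := hgPL
  obtain ⟨m, s, hm, hs0, hs1, hslt, hsaff⟩ := hhPL
  obtain ⟨mg, cg, hg⟩ := htaff 0 hn
  obtain ⟨mh, ch, hh⟩ := hsaff 0 hm
  rw [ht0] at hg
  rw [hs0] at hh
  have hT : 0 < t 1 := ht0 ▸ htlt 0 hn
  have hS : 0 < s 1 := hs0 ▸ hslt 0 hm
  have hcg : cg = 0 := by
    have := hg 0 ⟨le_refl _, hT.le⟩
    simpa [hg0] using this.symm
  have hch : ch = 0 := by
    have := hh 0 ⟨le_refl _, hS.le⟩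
    simpa [hh0] using this.symm
  -- mh > 0
  have hmh : 0 < mh := by
    set x0 : ℝ := min (s 1) 1 with hx0def
    have hx0pos : 0 < x0 := lt_min hS one_pos
    have hlt : h 0 < h x0 :=
      hmono ⟨le_refl _, zero_le_one⟩ ⟨hx0pos.le, min_le_right _ _⟩ hx0pos
    have hx0val : h x0 = mh * x0 := by
      have := hh x0 ⟨hx0pos.le, min_le_left _ _⟩
      rw [this, hch, add_zero]
    rw [hh0, hx0val] at hlt
    nlinarith
  -- choose a small positive point ε
  set ε : ℝ := min (min (s 1 / 2) (t 1 / mh)) (1 / 2) with hεdef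
  have hεpos : 0 < ε := by
    apply lt_min (lt_min (by linarith) (div_pos hT hmh))
    norm_num
  have hεhalf : ε ≤ 1 / 2 := min_le_right _ _
  have hεs : 2 * ε ≤ s 1 := by
    have h1 : ε ≤ s 1 / 2 := le_trans (min_le_left _ _) (min_le_left _ _)
    linarith
  have hεt : mh * ε ≤ t 1 := by
    have h1 : ε ≤ t 1 / mh := le_trans (min_le_left _ _) (min_le_right _ _)
    calc mh * ε ≤ mh * (t 1 / mh) := by nlinarith
      _ = t 1 := by field_simp
  -- tent ε = 2 * ε
  have htent : tent ε = 2 * ε := by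
    have : |1 - 2 * ε| = 1 - 2 * ε := abs_of_nonneg (by linarith)
    rw [tent, this]
    ring
  -- conjugacy at ε gives mg = 2
  have hconjε := hconj ε ⟨hεpos.le, by linarith⟩
  have hleft : h (tent ε) = mh * (2 * ε) := by
    rw [htent]
    have := hh (2 * ε) ⟨by linarith, hεs⟩
    rw [this, hch, add_zero]
  have hhε : h ε = mh * ε := by
    have := hh ε ⟨hεpos.le, by linarith [hεs]⟩
    rw [this, hch, add_zero]
  have hright : g (h ε) = mg * (mh * ε) := by
    rw [hhε]
    have := hg (mh * ε) ⟨by positivity, hεt⟩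
    rw [this, hcg, add_zero]
  rw [hleft, hright] at hconjε
  have hmg : mg = 2 := by
    have hne : mh * ε ≠ 0 := by positivity
    have : mg * (mh * ε) = 2 * (mh * ε) := by linarith
    exact mul_right_cancel₀ hne this
  -- conclude
  have base : HasDerivWithinAt (fun x : ℝ => 2 * x) 2 (Set.Ici 0) 0 := by
    simpa using (hasDerivWithinAt_id (0 : ℝ) (Set.Ici 0)).const_mul 2
  refine base.congr_of_eventuallyEq ?_ (by simp [hg0])
  filter_upwards [Icc_mem_nhdsGE_of_mem ⟨le_refl (0 : ℝ), hT⟩] with x hx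
  rw [hg x hx, hcg, hmg, add_zero]
end

section
/- Let g be piecewise linear unimodal with g(x) = 2x near 0, let h be a piecewise linear increasing homeomorphism of [0,1] with h ∘ f = g ∘ h for the tent map f, let ε be the first kink (smallest positive break point) of g and k the slope of h at 0. Then the first kink of h equals 2ε/k. -/
/-- `p` is the first kink of `F`: `F` is affine on `[0,p]` but on no larger interval
`[0,q]` with `p < q ≤ 1`. -/
def FirstKink (F : ℝ → ℝ) (p : ℝ) : Prop :=
  AffOn F (Set.Icc 0 p) ∧ ∀ q, p < q → q ≤ 1 → ¬ AffOn F (Set.Icc 0 q)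

/-- If `g` is piecewise linear with `g x = 2x` on `[0, ε]`, `ε` its first kink, and `h`
is a piecewise linear increasing homeomorphism conjugating the tent map to `g` with
slope `k` at zero, then the first kink of `h` is `2ε/k`. -/
theorem first_kink_of_conjugacy (g h : ℝ → ℝ) (ε k c : ℝ)
    (hε : ε ∈ Set.Ioo (0 : ℝ) (1 / 2))
    (hg2x : ∀ x ∈ Set.Icc (0 : ℝ) ε, g x = 2 * x)
    (hgkink : FirstKink g ε)
    (hk : 0 < k)
    (hhlin : ∀ x ∈ Set.Icc (0 : ℝ) c, h x = k * x)
    (hhkink : FirstKink h c) (hc : 0 < c)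
    (hmono : StrictMonoOn h (Set.Icc 0 1))
    (hh0 : h 0 = 0) (hh1 : h 1 = 1)
    (hhc : ContinuousOn h (Set.Icc 0 1))
    (hgc : ContinuousOn g (Set.Icc 0 1))
    (hconj : ∀ x ∈ Set.Icc (0 : ℝ) 1, h (tent x) = g (h x)) :
    c = 2 * ε / k := by
  obtain ⟨hε0, hε12⟩ := hε
  have htent : ∀ x : ℝ, 0 ≤ x → x ≤ 1/2 → tent x = 2 * x := by
    intro x hx0 hx1
    unfold tent
    rw [abs_of_nonneg (by linarith)]
    ring
  -- Step 0 : c < 1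
  have hc1 : c < 1 := by
    by_contra hcon
    push_neg at hcon
    have hk1 : k = 1 := by
      have := hhlin 1 ⟨by norm_num, hcon⟩
      rw [hh1] at this; linarith
    have haff : AffOn g (Set.Icc 0 (1/2)) := by
      refine ⟨2, 0, ?_⟩
      rintro y ⟨hy0, hy2⟩
      have hy1 : y ≤ 1 := by linarith
      have hhy : h y = y := by rw [hhlin y ⟨hy0, by linarith⟩, hk1]; ring
      have hco := hconj y ⟨hy0, hy1⟩
      rw [htent y hy0 hy2, hhy] at hco
      have h2y : h (2*y) = 2*y := by
        rw [hhlin (2*y) ⟨by linarith, by linarith⟩, hk1]; ring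
      rw [h2y] at hco
      linarith [hco]
    exact hgkink.2 (1/2) hε12 (by norm_num) haff
  have hkc : k * c = h c := (hhlin c ⟨le_of_lt hc, le_refl c⟩).symm
  have hkc1 : k * c < 1 := by
    rw [hkc, ← hh1]
    exact hmono ⟨le_of_lt hc, le_of_lt hc1⟩ ⟨by norm_num, le_refl 1⟩ hc1
  -- Step 1 : k * c ≤ 2 * ε
  have step1 : k * c ≤ 2 * ε := by
    by_contra hcon
    push_neg at hcon
    have haff : AffOn g (Set.Icc 0 (k*c/2)) := by
      refine ⟨2, 0, ?_⟩
      rintro y ⟨hy0, hyu⟩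
      set x := y / k with hxdef
      have hx0 : 0 ≤ x := div_nonneg hy0 hk.le
      have hxc : x ≤ c/2 := by
        rw [hxdef, div_le_iff₀ hk]
        nlinarith
      have hx12 : x ≤ 1/2 := by linarith
      have hhx : h x = y := by
        rw [hhlin x ⟨hx0, by linarith⟩, hxdef]
        field_simp
      have hh2x : h (2*x) = 2*y := by
        rw [hhlin (2*x) ⟨by linarith, by linarith⟩, hxdef]
        field_simp
      have hco := hconj x ⟨hx0, by linarith⟩
      rw [htent x hx0 hx12, hhx, hh2x] at hco
      linarith [hco]
    exact hgkink.2 (k*c/2) (by linarith) (by linarith) haff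
  -- Step 2 : 2 * ε / k ≤ c
  have hlin2 : ∀ y : ℝ, 0 ≤ y → y ≤ 2*ε/k → y ≤ 2*c → y ≤ 1 → h y = k * y := by
    intro y hy0 hyε hyc hy1
    have hxε : k * (y/2) ≤ ε := by
      have := (le_div_iff₀ hk).mp hyε
      nlinarith
    have hco := hconj (y/2) ⟨by linarith, by linarith⟩
    rw [htent (y/2) (by linarith) (by linarith), hhlin (y/2) ⟨by linarith, by linarith⟩,
      hg2x (k*(y/2)) ⟨mul_nonneg hk.le (by linarith), hxε⟩] at hco
    have h2 : 2 * (y/2) = y := by ring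
    rw [h2] at hco
    rw [hco]; ring
  have haffh : AffOn h (Set.Icc 0 (min (2*ε/k) (min (2*c) 1))) := by
    refine ⟨k, 0, ?_⟩
    rintro y ⟨hy0, hyu⟩
    rw [hlin2 y hy0 (le_trans hyu (min_le_left _ _))
      (le_trans hyu (le_trans (min_le_right _ _) (min_le_left _ _)))
      (le_trans hyu (le_trans (min_le_right _ _) (min_le_right _ _)))]
    ring
  have hq0le : min (2*ε/k) (min (2*c) 1) ≤ c := by
    by_contra hcon
    push_neg at hcon
    exact hhkink.2 _ hcon (le_trans (min_le_right _ _) (min_le_right _ _)) haffh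
  have h2εk : 2*ε/k ≤ c := by
    rcases le_or_gt (2*ε/k) c with h | h
    · exact h
    · exfalso
      have : c < min (2*ε/k) (min (2*c) 1) := lt_min h (lt_min (by linarith) hc1)
      linarith
  have hcle : c ≤ 2*ε/k := by
    rw [le_div_iff₀ hk]
    linarith
  linarith
end

section
/- Let 0 < a < b with 2a < 1 and b < 1, and let g be the piecewise linear map through (0,0), (a, 2a), (b, 1), (2b - a, 2a), (2a, 4(b - a)), (1, 0) — assumed to form a valid increasing-then-decreasing unimodal graph. Let h be the piecewise linear increasing map through (0,0), (a/b, 2a), (1,1). Then h ∘ f = g ∘ h, where f is the tent map; i.e. h conjugates the tent map to g. -/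
open Set

theorem AffOn.eqOn_of_endpoints {F G : ℝ → ℝ} {u v : ℝ} (hF : AffOn F (Icc u v))
    (hG : AffOn G (Icc u v)) (huv : u < v) (hu : F u = G u) (hv : F v = G v) :
    EqOn F G (Icc u v) := by
  obtain ⟨m, c, hFmc⟩ := hF
  obtain ⟨m', c', hGmc⟩ := hG
  rw [hFmc u (left_mem_Icc.2 huv.le), hGmc u (left_mem_Icc.2 huv.le)] at hu
  rw [hFmc v (right_mem_Icc.2 huv.le), hGmc v (right_mem_Icc.2 huv.le)] at hv
  have hm : m = m' := by
    have : (m - m') * (v - u) = 0 := by linear_combination hv - hu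
    simpa [sub_eq_zero, huv.ne'] using this
  have hc : c = c' := by subst hm; linarith
  intro x hx
  rw [hFmc x hx, hGmc x hx, hm, hc]

theorem tent_of_le_half {x : ℝ} (hx : x ≤ 1 / 2) : tent x = 2 * x := by
  rw [tent, abs_of_nonneg (by linarith)]
  ring

theorem tent_of_half_le {x : ℝ} (hx : 1 / 2 ≤ x) : tent x = 2 - 2 * x := by
  rw [tent, abs_of_nonpos (by linarith)]
  ring

section Conjugacy

variable {a b σ : ℝ} {g h : ℝ → ℝ}

theorem conj_of_le_half (ha : 0 < a) (hab : a < b) (hb : b < 2 * a)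
    (hH₁ : EqOn h (fun y ↦ 2 * b * y) (Icc 0 (a / b)))
    (hH₂ : EqOn h (fun y ↦ 1 + b * σ * (y - 1)) (Icc (a / b) 1))
    (hG₁ : EqOn g (fun y ↦ 2 * y) (Icc 0 a))
    (hG₂ : EqOn g (fun y ↦ 1 + σ * (y - b)) (Icc a b))
    {x : ℝ} (hx0 : 0 ≤ x) (hx : x ≤ 1 / 2) : h (2 * x) = g (h x) := by
  have hb0 : 0 < b := ha.trans hab
  have hhx : h x = 2 * b * x := hH₁ ⟨hx0, (le_div_iff₀ hb0).2 (by nlinarith)⟩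
  rw [hhx]
  rcases le_total (2 * b * x) a with hbx | hbx
  · rw [hH₁ ⟨by linarith, (le_div_iff₀ hb0).2 (by linarith)⟩, hG₁ ⟨by positivity, hbx⟩]
    ring
  · rw [hH₂ ⟨(div_le_iff₀ hb0).2 (by linarith), by linarith⟩, hG₂ ⟨hbx, by nlinarith⟩]
    ring

theorem conj_of_half_le (hab : a < b) (hb : 2 * b - a < 2 * a) (hσ : 0 < σ)
    (hσab : σ * (b - a) = 1 - 2 * a)
    (hH₁ : EqOn h (fun y ↦ 2 * b * y) (Icc 0 (a / b)))
    (hH₂ : EqOn h (fun y ↦ 1 + b * σ * (y - 1)) (Icc (a / b) 1))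
    (hG₃ : EqOn g (fun y ↦ 1 - σ * (y - b)) (Icc b (2 * b - a)))
    (hG₄ : EqOn g (fun y ↦ 4 * b - 2 * y) (Icc (2 * b - a) (2 * a)))
    (hG₅ : EqOn g (fun y ↦ 4 / σ * (1 - y)) (Icc (2 * a) 1))
    {x : ℝ} (hx1 : x ≤ 1) (hx : 1 / 2 ≤ x) : h (2 - 2 * x) = g (h x) := by
  have hb0 : 0 < b := by linarith
  rcases le_total x (a / b) with hxp | hxp
  · have hbx : b * x ≤ a := by rwa [le_div_iff₀ hb0, mul_comm] at hxp
    rw [hH₁ ⟨by linarith, hxp⟩]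
    rcases le_total (2 * b * x) (2 * b - a) with hbx' | hbx'
    · rw [hH₂ ⟨(div_le_iff₀ hb0).2 (by linarith), by linarith⟩, hG₃ ⟨by nlinarith, hbx'⟩]
      ring
    · rw [hH₁ ⟨by linarith, (le_div_iff₀ hb0).2 (by linarith)⟩, hG₄ ⟨hbx', by linarith⟩]
      ring
  · have hbx : a ≤ b * x := by rwa [div_le_iff₀ hb0, mul_comm] at hxp
    have hhx : h x = 1 + b * σ * (x - 1) := hH₂ ⟨hxp, hx1⟩
    have hhx_mem : h x ∈ Icc (2 * a) 1 := by
      rw [hhx]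
      constructor <;> nlinarith [mul_nonneg hσ.le (sub_nonneg.2 hx1)]
    rw [hH₁ ⟨by linarith, (le_div_iff₀ hb0).2 (by nlinarith)⟩, hG₅ hhx_mem, hhx]
    field_simp
    ring

end Conjugacy

theorem conj_example3_general (a b : ℝ)
    (ha : 0 < a) (hab : a < b) (hord : 2 * b - a < 2 * a) (h2a : 2 * a < 1)
    (g h : ℝ → ℝ)
    (hg0 : g 0 = 0) (hg1 : g a = 2 * a) (hg2 : g b = 1)
    (hg3 : g (2 * b - a) = 2 * a) (hg4 : g (2 * a) = 4 * (b - a)) (hg5 : g 1 = 0)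
    (hgA1 : AffOn g (Set.Icc 0 a))
    (hgA2 : AffOn g (Set.Icc a b))
    (hgA3 : AffOn g (Set.Icc b (2 * b - a)))
    (hgA4 : AffOn g (Set.Icc (2 * b - a) (2 * a)))
    (hgA5 : AffOn g (Set.Icc (2 * a) 1))
    (hh0 : h 0 = 0) (hh1 : h (a / b) = 2 * a) (hh2 : h 1 = 1)
    (hhA1 : AffOn h (Set.Icc 0 (a / b)))
    (hhA2 : AffOn h (Set.Icc (a / b) 1)) :
    ∀ x ∈ Set.Icc (0 : ℝ) 1, h (tent x) = g (h x) := by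
  have hb : 0 < b := ha.trans hab
  obtain ⟨σ, hσ, hσab⟩ : ∃ σ, 0 < σ ∧ σ * (b - a) = 1 - 2 * a :=
    ⟨_, div_pos (by linarith) (by linarith), div_mul_cancel₀ _ (by linarith)⟩
  have hH₁ := hhA1.eqOn_of_endpoints (G := fun y ↦ 2 * b * y)
    ⟨2 * b, 0, fun _ _ ↦ by ring⟩ (div_pos ha hb) (by simp [hh0]) (by simp only [hh1]; field_simp)
  have hH₂ := hhA2.eqOn_of_endpoints (G := fun y ↦ 1 + b * σ * (y - 1))
    ⟨b * σ, 1 - b * σ, fun _ _ ↦ by ring⟩ ((div_lt_one hb).2 hab)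
    (by simp only [hh1]; field_simp; linear_combination hσab) (by simp [hh2])
  have hG₁ := hgA1.eqOn_of_endpoints (G := fun y ↦ 2 * y)
    ⟨2, 0, fun _ _ ↦ by ring⟩ ha (by simp [hg0]) (by simp [hg1])
  have hG₂ := hgA2.eqOn_of_endpoints (G := fun y ↦ 1 + σ * (y - b))
    ⟨σ, 1 - σ * b, fun _ _ ↦ by ring⟩ hab
    (by simp only [hg1]; linear_combination hσab) (by simp [hg2])
  have hG₃ := hgA3.eqOn_of_endpoints (G := fun y ↦ 1 - σ * (y - b))
    ⟨-σ, 1 + σ * b, fun _ _ ↦ by ring⟩ (by linarith) (by simp [hg2])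
    (by simp only [hg3]; linear_combination hσab)
  have hG₄ := hgA4.eqOn_of_endpoints (G := fun y ↦ 4 * b - 2 * y)
    ⟨-2, 4 * b, fun _ _ ↦ by ring⟩ hord (by simp only [hg3]; ring) (by simp only [hg4]; ring)
  have hG₅ := hgA5.eqOn_of_endpoints (G := fun y ↦ 4 / σ * (1 - y))
    ⟨-(4 / σ), 4 / σ, fun _ _ ↦ by ring⟩ h2a
    (by simp only [hg4]; field_simp; linear_combination hσab) (by simp [hg5])
  rintro x ⟨hx0, hx1⟩
  rcases le_total x (1 / 2) with hx | hx
  · rw [tent_of_le_half hx]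
    exact conj_of_le_half ha hab (by linarith) hH₁ hH₂ hG₁ hG₂ hx0 hx
  · rw [tent_of_half_le hx]
    exact conj_of_half_le hab hord hσ hσab hH₁ hH₂ hG₃ hG₄ hG₅ hx1 hx

/-- The piecewise linear map `g` through `(0,0)`, `(a,2a)`, `(b,1)`, `(2b-a,2a)`,
`(2a, 4(b-a))`, `(1,0)` is conjugate to the tent map via the piecewise linear increasing
map `h` through `(0,0)`, `(a/b, 2a)`, `(1,1)`. -/
theorem conj_example3 (a b : ℝ)
    (ha : 0 < a) (hab : a < b) (hord : 2 * b - a < 2 * a) (h2a : 2 * a < 1)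
    (hdec : 4 * (b - a) < 2 * a) (g h : ℝ → ℝ)
    (hg0 : g 0 = 0) (hg1 : g a = 2 * a) (hg2 : g b = 1)
    (hg3 : g (2 * b - a) = 2 * a) (hg4 : g (2 * a) = 4 * (b - a)) (hg5 : g 1 = 0)
    (hgA1 : AffOn g (Set.Icc 0 a))
    (hgA2 : AffOn g (Set.Icc a b))
    (hgA3 : AffOn g (Set.Icc b (2 * b - a)))
    (hgA4 : AffOn g (Set.Icc (2 * b - a) (2 * a)))
    (hgA5 : AffOn g (Set.Icc (2 * a) 1))
    (hh0 : h 0 = 0) (hh1 : h (a / b) = 2 * a) (hh2 : h 1 = 1)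
    (hhA1 : AffOn h (Set.Icc 0 (a / b)))
    (hhA2 : AffOn h (Set.Icc (a / b) 1)) :
    ∀ x ∈ Set.Icc (0 : ℝ) 1, h (tent x) = g (h x) :=
  conj_example3_general a b ha hab hord h2a g h hg0 hg1 hg2 hg3 hg4 hg5 hgA1 hgA2 hgA3 hgA4 hgA5 hh0
    hh1 hh2 hhA1 hhA2
end
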